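/- Let $A_1,\dots,A_p$ be symmetric $n\times n$ real matrices ($p\geq 1$). Then $\sum_{k,l=1}^p \big(\mathrm{tr}(A_kA_l)\big)^2 + \sum_{k,l=1}^p \|[A_k,A_l]\|^2 \leq \big(2-\tfrac{1}{p}\big)\Big(\sum_{k=1}^p \mathrm{tr}(A_k^2)\Big)^2$, where $[A_k,A_l]=A_kA_l-A_lA_k$ and $\|B\|^2=\mathrm{tr}(B^TB)$. -/

import Mathlib

/-!
Diagonalising a symmetric `A = diag(d)` by an orthogonal conjugation, which preserves all the
traces involved, gives `‖[A,B]‖² = Σᵢⱼ (dᵢ - dⱼ)² Bᵢⱼ²` and `tr(AB) = Σᵢ dᵢ Bᵢᵢ`. Bounding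
`(dᵢ - dⱼ)² ≤ 2‖A‖²` off the diagonal and using Cauchy–Schwarz on the diagonal yields
`‖[A,B]‖² + 2 tr(AB)² ≤ 2 ‖A‖² ‖B‖²`. Summed over all pairs `(Aₖ, Aₗ)`, this bounds the left side
of Simons' inequality by `2 N² - Σₖₗ tr(AₖAₗ)²` with `N = Σₖ ‖Aₖ‖²`, and
`Σₖₗ tr(AₖAₗ)² ≥ Σₖ ‖Aₖ‖⁴ ≥ N² / p` by Cauchy–Schwarz again.
-/

open Matrix Finset Unitary

theorem sq_sub_le_two_mul_sum_sq {ι : Type*} [Fintype ι] (d : ι → ℝ) {i j : ι} (hij : i ≠ j) :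
    (d i - d j) ^ 2 ≤ 2 * ∑ k, d k ^ 2 := by
  classical
  have hpair : d i ^ 2 + d j ^ 2 ≤ ∑ k, d k ^ 2 := by
    rw [← Finset.sum_pair (f := fun k => d k ^ 2) hij]
    exact Finset.sum_le_univ_sum_of_nonneg fun k => sq_nonneg (d k)
  nlinarith [sq_nonneg (d i + d j)]

namespace Matrix

variable {m R : Type*} [Fintype m]

theorem trace_transpose_mul_self_eq_sum_sq [Semiring R] (X : Matrix m m R) :
    (Xᵀ * X).trace = ∑ i, ∑ j, X j i ^ 2 := by
  simp only [trace, diag_apply, mul_apply, transpose_apply, sq]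

variable [DecidableEq m]

theorem trace_conjStarAlgAut [CommSemiring R] [StarRing R] (u : unitary (Matrix m m R))
    (X : Matrix m m R) : (conjStarAlgAut R _ u X).trace = X.trace := by
  rw [conjStarAlgAut_apply, trace_mul_cycle, coe_star_mul_self, one_mul]

theorem transpose_conjStarAlgAut [CommSemiring R] [StarRing R] [TrivialStar R]
    (u : unitary (Matrix m m R)) (X : Matrix m m R) :
    (conjStarAlgAut R _ u X)ᵀ = conjStarAlgAut R _ u Xᵀ := by
  simpa only [star_eq_conjTranspose, conjTranspose_eq_transpose_of_trivial]
    using (map_star (conjStarAlgAut R _ u) X).symm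

theorem trace_commutator_sq_add_two_mul_trace_sq_le_of_diagonal (d : m → ℝ) (B : Matrix m m ℝ) :
    ((diagonal d * B - B * diagonal d)ᵀ * (diagonal d * B - B * diagonal d)).trace
        + 2 * (diagonal d * B).trace ^ 2
      ≤ 2 * ((diagonal d)ᵀ * diagonal d).trace * (Bᵀ * B).trace := by
  set S := ∑ k, d k ^ 2
  have hcomm : ((diagonal d * B - B * diagonal d)ᵀ * (diagonal d * B - B * diagonal d)).trace
      = ∑ j, ∑ i, (d i - d j) ^ 2 * B i j ^ 2 := by
    simp only [trace_transpose_mul_self_eq_sum_sq, sub_apply, diagonal_mul, mul_diagonal]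
    exact sum_congr rfl fun j _ => sum_congr rfl fun i _ => by ring
  have hdiag : ((diagonal d)ᵀ * diagonal d).trace = S := by
    simp only [diagonal_transpose, diagonal_mul_diagonal, trace_diagonal, S, sq]
  have hmul : (diagonal d * B).trace = ∑ i, d i * B i i := by
    simp only [trace, diag_apply, diagonal_mul]
  have hB : (Bᵀ * B).trace = ∑ j, (B j j ^ 2 + ∑ i ∈ univ.erase j, B i j ^ 2) := by
    rw [trace_transpose_mul_self_eq_sum_sq]
    exact sum_congr rfl fun j _ => (add_sum_erase _ (fun i => B i j ^ 2) (mem_univ j)).symm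
  have hoff : ∑ j, ∑ i, (d i - d j) ^ 2 * B i j ^ 2
      ≤ 2 * S * ∑ j, ∑ i ∈ univ.erase j, B i j ^ 2 := by
    simp only [mul_sum]
    refine sum_le_sum fun j _ => ?_
    rw [← sum_erase univ (a := j) (by simp)]
    exact sum_le_sum fun i hi =>
      mul_le_mul_of_nonneg_right (sq_sub_le_two_mul_sum_sq d (ne_of_mem_erase hi)) (sq_nonneg _)
  have hcs : (∑ i, d i * B i i) ^ 2 ≤ S * ∑ i, B i i ^ 2 := sum_mul_sq_le_sq_mul_sq _ _ _
  rw [hcomm, hdiag, hmul, hB, sum_add_distrib]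
  linarith

theorem trace_commutator_sq_add_two_mul_trace_sq_le {A : Matrix m m ℝ} (hA : Aᵀ = A)
    (B : Matrix m m ℝ) :
    ((A * B - B * A)ᵀ * (A * B - B * A)).trace + 2 * (A * B).trace ^ 2
      ≤ 2 * (Aᵀ * A).trace * (Bᵀ * B).trace := by
  have hA' : A.IsHermitian := by rwa [IsHermitian, conjTranspose_eq_transpose_of_trivial]
  obtain ⟨d, u, hu⟩ : ∃ (d : m → ℝ) (u : unitary (Matrix m m ℝ)),
      conjStarAlgAut ℝ _ u A = diagonal d :=
    ⟨_, _, hA'.conjStarAlgAut_star_eigenvectorUnitary⟩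
  have h := trace_commutator_sq_add_two_mul_trace_sq_le_of_diagonal d (conjStarAlgAut ℝ _ u B)
  rw [← hu] at h
  simpa only [transpose_conjStarAlgAut, ← map_mul, ← map_sub, trace_conjStarAlgAut] using h

end Matrix

theorem sum_sq_add_sum_le_of_forall_le {ι : Type*} [Fintype ι] (S c : ι → ι → ℝ)
    (h : ∀ k l, c k l + 2 * S k l ^ 2 ≤ 2 * S k k * S l l) :
    ∑ k, ∑ l, S k l ^ 2 + ∑ k, ∑ l, c k l
      ≤ (2 - 1 / Fintype.card ι) * (∑ k, S k k) ^ 2 := by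
  have hc : ∑ k, ∑ l, c k l ≤ 2 * (∑ k, S k k) ^ 2 - 2 * ∑ k, ∑ l, S k l ^ 2 := by
    calc ∑ k, ∑ l, c k l ≤ ∑ k, ∑ l, (2 * S k k * S l l - 2 * S k l ^ 2) :=
          sum_le_sum fun k _ => sum_le_sum fun l _ => by linarith [h k l]
      _ = 2 * (∑ k, S k k) ^ 2 - 2 * ∑ k, ∑ l, S k l ^ 2 := by
          simp only [sum_sub_distrib, ← mul_sum, sq, sum_mul_sum, mul_assoc]
  have hdiag : ∑ k, S k k ^ 2 ≤ ∑ k, ∑ l, S k l ^ 2 :=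
    sum_le_sum fun k _ => single_le_sum (f := fun l => S k l ^ 2) (fun l _ => sq_nonneg _)
      (mem_univ k)
  have hcs : (∑ k, S k k) ^ 2 / Fintype.card ι ≤ ∑ k, S k k ^ 2 :=
    div_le_of_le_mul₀ (Nat.cast_nonneg _) (sum_nonneg fun k _ => sq_nonneg _)
      (by simpa [mul_comm] using sq_sum_le_card_mul_sum_sq (s := univ) (f := fun k => S k k))
  have hrhs : (2 - 1 / (Fintype.card ι : ℝ)) * (∑ k, S k k) ^ 2
      = 2 * (∑ k, S k k) ^ 2 - (∑ k, S k k) ^ 2 / Fintype.card ι := by ring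
  linarith

theorem stmt_14_general (n p : ℕ) (A : Fin p → Matrix (Fin n) (Fin n) ℝ)
    (hsym : ∀ k, (A k)ᵀ = A k) :
    (∑ k, ∑ l, ((A k * A l).trace) ^ 2) +
      (∑ k, ∑ l, ((A k * A l - A l * A k)ᵀ * (A k * A l - A l * A k)).trace)
    ≤ (2 - 1 / (p : ℝ)) * (∑ k, (A k ^ 2).trace) ^ 2 := by
  have key : ∀ k l, ((A k * A l - A l * A k)ᵀ * (A k * A l - A l * A k)).trace
      + 2 * (A k * A l).trace ^ 2 ≤ 2 * (A k * A k).trace * (A l * A l).trace := fun k l => by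
    simpa only [hsym] using trace_commutator_sq_add_two_mul_trace_sq_le (hsym k) (A l)
  simpa only [Fintype.card_fin, sq] using sum_sq_add_sum_le_of_forall_le _ _ key

/-- Simons' algebraic inequality (Lemma 5.3.1 of Simons): for symmetric `n × n`
matrices `A₁,…,A_p`,
`Σ_{k,l} (tr(AₖAₗ))² + Σ_{k,l} ‖[Aₖ,Aₗ]‖² ≤ (2 - 1/p) (Σₖ tr(Aₖ²))²`,
where `‖B‖² = tr(Bᵀ B)`. -/
theorem stmt_14 (n p : ℕ) (hp : 1 ≤ p) (A : Fin p → Matrix (Fin n) (Fin n) ℝ)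
    (hsym : ∀ k, (A k)ᵀ = A k) :
    (∑ k, ∑ l, ((A k * A l).trace) ^ 2) +
      (∑ k, ∑ l, ((A k * A l - A l * A k)ᵀ * (A k * A l - A l * A k)).trace)
    ≤ (2 - 1 / (p : ℝ)) * (∑ k, (A k ^ 2).trace) ^ 2 :=
  stmt_14_general n p A hsym
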